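/- Let G and H be groups, φ : G → H a surjective group homomorphism, and S ⊆ G a finite subset satisfying conditions (H2), (H4) and (H6). Then for all f₁, f₂ ∈ H with f₂ ∈ P'⁺(f₁), there exist g₁, g₂ ∈ G with φ(g₁) = f₁, φ(g₂) = f₂ and g₂ ∈ P⁺(g₁), such that P'⁺(f₁) ∩ P'⁺(f₂) = φ(P⁺(g₁) ∩ P⁺(g₂)) and φ is injective on P⁺(g₁) ∩ P⁺(g₂); in particular the finite sets P'⁺(f₁) ∩ P'⁺(f₂) and P⁺(g₁) ∩ P⁺(g₂) have the same cardinality. -/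

import Mathlib

/-- Local perspective present `P⁺(g) = {g*a*b⁻¹ : a, b ∈ S}`. -/
def Pplus {G : Type*} [Group G] [DecidableEq G] (S : Finset G) (g : G) : Finset G :=
  (S ×ˢ S).image fun p => g * p.1 * p.2⁻¹

/-- `P'⁺(f) = {f*φ(a)*φ(b)⁻¹ : a, b ∈ S}` in the quotient. -/
def Pplus' {G H : Type*} [Group G] [Group H] [DecidableEq H] (φ : G →* H) (S : Finset G)
    (f : H) : Finset H :=
  (S ×ˢ S).image fun p => f * φ p.1 * (φ p.2)⁻¹

/-- Condition (H2): for all `a, b ∈ S`, `φ(a*b⁻¹) = 1 ↔ a*b⁻¹ = 1`. -/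
def CondH2 {G H : Type*} [Group G] [Group H] (φ : G →* H) (S : Finset G) : Prop :=
  ∀ a ∈ S, ∀ b ∈ S, (φ (a * b⁻¹) = 1 ↔ a * b⁻¹ = 1)

/-- Condition (H4): for all `a, b, c, d ∈ S`, `φ(a*b⁻¹*c*d⁻¹) = 1 ↔ a*b⁻¹*c*d⁻¹ = 1`. -/
def CondH4 {G H : Type*} [Group G] [Group H] (φ : G →* H) (S : Finset G) : Prop :=
  ∀ a ∈ S, ∀ b ∈ S, ∀ c ∈ S, ∀ d ∈ S,
    (φ (a * b⁻¹ * c * d⁻¹) = 1 ↔ a * b⁻¹ * c * d⁻¹ = 1)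

/-- Condition (H6): for all `a, b, c, d, e, f ∈ S`,
`φ(a*b⁻¹*c*d⁻¹*e*f⁻¹) = 1 ↔ a*b⁻¹*c*d⁻¹*e*f⁻¹ = 1`. -/
def CondH6 {G H : Type*} [Group G] [Group H] (φ : G →* H) (S : Finset G) : Prop :=
  ∀ a ∈ S, ∀ b ∈ S, ∀ c ∈ S, ∀ d ∈ S, ∀ e ∈ S, ∀ f ∈ S,
    (φ (a * b⁻¹ * c * d⁻¹ * e * f⁻¹) = 1 ↔ a * b⁻¹ * c * d⁻¹ * e * f⁻¹ = 1)


/-!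
Lift `f₁` to some `g₁` and take `g₂ = g₁ * a * b⁻¹` for the pair `(a, b)` exhibiting
`f₂ ∈ P'⁺(f₁)`; then `φ` maps `P⁺(g₁)` onto `P'⁺(f₁)` and `P⁺(g₂)` onto `P'⁺(f₂)`.
Two points of `P⁺(g₁) ∪ P⁺(g₂)` differ, after conjugation by `g₁`, by a word of length at
most six in `S` and `S⁻¹` (four if both lie in the same present), so (H4) and (H6) make `φ`
injective on the union, and the image of the intersection is the intersection of the images.
-/

section Perspective

variable {G H : Type*} [Group G] [Group H] (φ : G →* H) {S : Finset G}

theorem mem_Pplus [DecidableEq G] {g x : G} :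
    x ∈ Pplus S g ↔ ∃ a ∈ S, ∃ b ∈ S, g * a * b⁻¹ = x := by
  simp [Pplus, and_assoc]

theorem Pplus'_map_eq_image [DecidableEq G] [DecidableEq H] (S : Finset G) (g : G) :
    Pplus' φ S (φ g) = (Pplus S g).image φ := by
  rw [Pplus, Pplus', Finset.image_image]
  exact Finset.image_congr fun p _ => by simp

theorem MonoidHom.eq_of_map_eq_of_map_mul_inv {x y : G}
    (hker : φ (x * y⁻¹) = 1 → x * y⁻¹ = 1) (h : φ x = φ y) : x = y :=
  mul_inv_eq_one.mp <| hker <| by rw [map_mul, map_inv, h, mul_inv_cancel]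

variable {φ}

theorem CondH4.eq_of_map_eq (h4 : CondH4 φ S) {c d c' d' : G} (hc : c ∈ S) (hd : d ∈ S)
    (hc' : c' ∈ S) (hd' : d' ∈ S) (h : φ (c * d⁻¹) = φ (c' * d'⁻¹)) :
    c * d⁻¹ = c' * d'⁻¹ := by
  refine φ.eq_of_map_eq_of_map_mul_inv (fun h1 => ?_) h
  have hw : c * d⁻¹ * (c' * d'⁻¹)⁻¹ = c * d⁻¹ * d' * c'⁻¹ := by group
  rw [hw] at h1 ⊢
  exact (h4 c hc d hd d' hd' c' hc').mp h1

theorem CondH6.eq_of_map_eq (h6 : CondH6 φ S) {a b c d e f : G} (ha : a ∈ S) (hb : b ∈ S)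
    (hc : c ∈ S) (hd : d ∈ S) (he : e ∈ S) (hf : f ∈ S)
    (h : φ (a * b⁻¹ * (c * d⁻¹)) = φ (e * f⁻¹)) :
    a * b⁻¹ * (c * d⁻¹) = e * f⁻¹ := by
  refine φ.eq_of_map_eq_of_map_mul_inv (fun h1 => ?_) h
  have hw : a * b⁻¹ * (c * d⁻¹) * (e * f⁻¹)⁻¹ = a * b⁻¹ * c * d⁻¹ * f * e⁻¹ := by group
  rw [hw] at h1 ⊢
  exact (h6 a ha b hb c hc d hd f hf e he).mp h1

variable [DecidableEq G]

theorem CondH4.injOn_Pplus (h4 : CondH4 φ S) (g : G) :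
    Set.InjOn φ (Pplus S g : Set G) := by
  rintro _ hx _ hy hxy
  obtain ⟨c, hc, d, hd, rfl⟩ := mem_Pplus.mp hx
  obtain ⟨c', hc', d', hd', rfl⟩ := mem_Pplus.mp hy
  have key := h4.eq_of_map_eq hc hd hc' hd'
  simp only [mul_assoc, map_mul, mul_right_inj] at hxy key ⊢
  exact key hxy

theorem CondH6.eq_of_mem_Pplus_of_map_eq (h6 : CondH6 φ S) {a b g x y : G} (ha : a ∈ S)
    (hb : b ∈ S) (hx : x ∈ Pplus S (g * a * b⁻¹)) (hy : y ∈ Pplus S g) (hxy : φ x = φ y) :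
    x = y := by
  obtain ⟨c, hc, d, hd, rfl⟩ := mem_Pplus.mp hx
  obtain ⟨e, he, f, hf, rfl⟩ := mem_Pplus.mp hy
  have key := h6.eq_of_map_eq ha hb hc hd he hf
  simp only [mul_assoc, map_mul, mul_right_inj] at hxy key ⊢
  exact key hxy

theorem injOn_Pplus_union (h4 : CondH4 φ S) (h6 : CondH6 φ S) {a b : G} (ha : a ∈ S)
    (hb : b ∈ S) (g : G) :
    Set.InjOn φ (Pplus S g ∪ Pplus S (g * a * b⁻¹) : Set G) := by
  rintro x hx y hy hxy
  rcases hx with hx | hx <;> rcases hy with hy | hy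
  · exact h4.injOn_Pplus g hx hy hxy
  · exact (h6.eq_of_mem_Pplus_of_map_eq ha hb hy hx hxy.symm).symm
  · exact h6.eq_of_mem_Pplus_of_map_eq ha hb hx hy hxy
  · exact h4.injOn_Pplus _ hx hy hxy

end Perspective

theorem perspective_intersections_of_quotient_general {G H : Type*} [Group G] [Group H]
    [DecidableEq G] [DecidableEq H] (φ : G →* H) (S : Finset G)
    (hsurj : Function.Surjective φ) (h4 : CondH4 φ S) (h6 : CondH6 φ S)
    (f₁ f₂ : H) (hmem : f₂ ∈ Pplus' φ S f₁) :
    ∃ g₁ g₂ : G, φ g₁ = f₁ ∧ φ g₂ = f₂ ∧ g₂ ∈ Pplus S g₁ ∧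
      Pplus' φ S f₁ ∩ Pplus' φ S f₂ = (Pplus S g₁ ∩ Pplus S g₂).image φ ∧
      Set.InjOn φ ((Pplus S g₁ ∩ Pplus S g₂ : Finset G) : Set G) ∧
      (Pplus' φ S f₁ ∩ Pplus' φ S f₂).card = (Pplus S g₁ ∩ Pplus S g₂).card := by
  obtain ⟨g₁, rfl⟩ := hsurj f₁
  rw [Pplus'_map_eq_image, Finset.mem_image] at hmem
  obtain ⟨g₂, hg₂, rfl⟩ := hmem
  obtain ⟨a, ha, b, hb, rfl⟩ := mem_Pplus.mp hg₂
  have hinj := injOn_Pplus_union h4 h6 ha hb g₁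
  have hinter : Pplus' φ S (φ g₁) ∩ Pplus' φ S (φ (g₁ * a * b⁻¹)) =
      (Pplus S g₁ ∩ Pplus S (g₁ * a * b⁻¹)).image φ := by
    rw [Pplus'_map_eq_image, Pplus'_map_eq_image, Finset.image_inter_of_injOn _ _ hinj]
  have hinjInter : Set.InjOn φ (Pplus S g₁ ∩ Pplus S (g₁ * a * b⁻¹) : Finset G) :=
    hinj.mono (by rw [Finset.coe_inter]; exact inf_le_sup)
  exact ⟨g₁, _, rfl, rfl, hg₂, hinter, hinjInter,
    hinter ▸ Finset.card_image_of_injOn hinjInter⟩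

theorem perspective_intersections_of_quotient {G H : Type*} [Group G] [Group H]
    [DecidableEq G] [DecidableEq H] (φ : G →* H) (S : Finset G)
    (hsurj : Function.Surjective φ) (h2 : CondH2 φ S) (h4 : CondH4 φ S) (h6 : CondH6 φ S)
    (f₁ f₂ : H) (hmem : f₂ ∈ Pplus' φ S f₁) :
    ∃ g₁ g₂ : G, φ g₁ = f₁ ∧ φ g₂ = f₂ ∧ g₂ ∈ Pplus S g₁ ∧
      Pplus' φ S f₁ ∩ Pplus' φ S f₂ = (Pplus S g₁ ∩ Pplus S g₂).image φ ∧
      Set.InjOn φ ((Pplus S g₁ ∩ Pplus S g₂ : Finset G) : Set G) ∧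
      (Pplus' φ S f₁ ∩ Pplus' φ S f₂).card = (Pplus S g₁ ∩ Pplus S g₂).card :=
  perspective_intersections_of_quotient_general φ S hsurj h4 h6 f₁ f₂ hmem
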